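/- Let R be a rectangle with dimensions (x,y). Then the number of sets in F_0(R) satisfies |F_0(R)| ≤ Σ_{r=1}^{y} 8^y · C(y−1, r−1) · x^r, where C(n,k) is the binomial coefficient. -/

import Mathlib

open Real

def nbhd : Finset (ℤ × ℤ) := {(-2,0), (-1,0), (0,-1), (0,1), (1,0), (2,0)}

def bootOp (N : Finset (ℤ × ℤ)) (r : ℕ) (S : Set (ℤ × ℤ)) : Set (ℤ × ℤ) :=
  S ∪ {v | r ≤ (((fun n => v + n) '' (N : Set (ℤ × ℤ))) ∩ S).ncard}

def bsClosure (N : Finset (ℤ × ℤ)) (r : ℕ) (S : Set (ℤ × ℤ)) : Set (ℤ × ℤ) :=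
  ⋃ t : ℕ, (bootOp N r)^[t] S

noncomputable def rectF (a b c d : ℤ) : Finset (ℤ × ℤ) := Finset.Icc a b ×ˢ Finset.Icc c d

open Classical in
noncomputable def prob (F : Finset (ℤ × ℤ)) (p : ℝ) (E : Set (ℤ × ℤ) → Prop) : ℝ :=
  ∑ T ∈ F.powerset, if E (T : Set (ℤ × ℤ)) then p ^ T.card * (1 - p) ^ (F.card - T.card) else 0

def internallyFilled (N : Finset (ℤ × ℤ)) (r : ℕ) (R S : Set (ℤ × ℤ)) : Prop :=
  R ⊆ bsClosure N r (S ∩ R)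

def upTrav (a b c d : ℤ) (S : Set (ℤ × ℤ)) : Prop :=
  (rectF a b c d : Set (ℤ × ℤ)) ⊆
    bsClosure nbhd 3 (((rectF a b c d : Set (ℤ × ℤ)) ∩ S) ∪ (rectF a b (c-1) (c-1) : Set (ℤ × ℤ)))

def spanningPair (a b c : ℤ) (P : Set (ℤ × ℤ)) : Prop :=
  (rectF a b c c : Set (ℤ × ℤ)) ⊆ bsClosure nbhd 3 (P ∪ (rectF a b (c-1) (c-1) : Set (ℤ × ℤ)))

def F0 (a b c d : ℤ) : Set (Set (ℤ × ℤ)) :=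
  {A | A ⊆ (rectF a b c d : Set (ℤ × ℤ)) ∧ upTrav a b c d A ∧
    (∀ A' : Set (ℤ × ℤ), A' ⊂ A → ¬ upTrav a b c d A') ∧
    ∀ j : ℤ, c ≤ j → j ≤ d →
      ∃ u v : ℤ × ℤ, u ∈ A ∧ v ∈ A ∧ u ≠ v ∧ spanningPair a b j {u, v}}

def U0 (a b c d : ℤ) : Set (Set (ℤ × ℤ)) := {S | ∃ A ∈ F0 a b c d, A ⊆ S}

/-!
Take `A ∈ F0 R`. If a pair `{u, v}` spans row `j` from the full row below, then either the pair
covers the row, or one of `u, v` lies in row `j` and the other sits at one of eight fixed offsets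
from it: otherwise the half-plane below row `j` together with `u` and `v` is already closed under
the bootstrap operator. The union of one such pair per row is up-traversable, so by minimality it
is `A`. Hence `A` is determined by `y` choices among `8x`, and `(8x)^y` is the `r = y` term of the
sum.
-/

section Closure

variable {N : Finset (ℤ × ℤ)} {r : ℕ} {S T U : Set (ℤ × ℤ)}

lemma bootOp_mono (h : S ⊆ T) : bootOp N r S ⊆ bootOp N r T :=
  Set.union_subset_union h fun _ hv => hv.trans <|
    Set.ncard_le_ncard (Set.inter_subset_inter_right _ h) ((N.finite_toSet.image _).inter_of_left _)

lemma monotone_bootOp_iterate : Monotone fun t => (bootOp N r)^[t] S :=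
  monotone_nat_of_le_succ fun t => by
    rw [Function.iterate_succ_apply']
    exact Set.subset_union_left

lemma subset_bsClosure : S ⊆ bsClosure N r S :=
  Set.subset_iUnion (fun t => (bootOp N r)^[t] S) 0

lemma bsClosure_minimal (hS : S ⊆ U) (hU : bootOp N r U ⊆ U) : bsClosure N r S ⊆ U := by
  refine Set.iUnion_subset fun t => ?_
  induction t with
  | zero => exact hS
  | succ t ih =>
    rw [Function.iterate_succ_apply']
    exact (bootOp_mono ih).trans hU

/-- A site with `r` neighbours in the closure already has them at some finite time, since `N` is
finite and the iterates increase. -/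
lemma bootOp_bsClosure_subset : bootOp N r (bsClosure N r S) ⊆ bsClosure N r S := by
  rintro v (hv | hv)
  · exact hv
  set W := ((fun n => v + n) '' (N : Set (ℤ × ℤ))) ∩ bsClosure N r S
  have hW : W.Finite := (N.finite_toSet.image _).inter_of_left _
  obtain ⟨t, ht⟩ := monotone_bootOp_iterate.directed_le.exists_mem_subset_of_finset_subset_biUnion
    (s := hW.toFinset) (by rw [hW.coe_toFinset]; exact Set.inter_subset_right)
  rw [hW.coe_toFinset] at ht
  refine Set.mem_iUnion.mpr ⟨t + 1, ?_⟩
  rw [Function.iterate_succ_apply']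
  exact Or.inr <| hv.trans <| Set.ncard_le_ncard (Set.subset_inter Set.inter_subset_left ht)
    ((N.finite_toSet.image _).inter_of_left _)

lemma bsClosure_subset_of_subset_bsClosure (h : S ⊆ bsClosure N r T) :
    bsClosure N r S ⊆ bsClosure N r T :=
  bsClosure_minimal h bootOp_bsClosure_subset

end Closure

def rowPairOffsets : Finset (ℤ × ℤ) := {(1,0), (2,0), (3,0), (4,0), (-2,1), (-1,1), (1,1), (2,1)}

lemma eq_or_snd_nonneg_of_mem_nbhd : ∀ n ∈ nbhd, n = (0, -1) ∨ 0 ≤ n.2 := by decide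

lemma sub_mem_rowPairOffsets_of_mem_nbhd :
    ∀ s ∈ nbhd, ∀ t ∈ nbhd, 0 ≤ s.2 → 0 ≤ t.2 → s ≠ t →
      (s.2 = 0 ∧ t - s ∈ rowPairOffsets) ∨ (t.2 = 0 ∧ s - t ∈ rowPairOffsets) := by
  decide

lemma mem_rectF {a b c d : ℤ} {w : ℤ × ℤ} :
    w ∈ (rectF a b c d : Set (ℤ × ℤ)) ↔ a ≤ w.1 ∧ w.1 ≤ b ∧ c ≤ w.2 ∧ w.2 ≤ d := by
  simp only [rectF, Finset.coe_product, Set.mem_prod, Finset.coe_Icc, Set.mem_Icc, and_assoc]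

lemma mem_image_add_nbhd {w z : ℤ × ℤ} :
    z ∈ (fun n => w + n) '' (nbhd : Set (ℤ × ℤ)) ↔ z - w ∈ nbhd := by
  constructor
  · rintro ⟨n, hn, rfl⟩
    simpa using hn
  · exact fun h => ⟨z - w, h, add_sub_cancel w z⟩

lemma ncard_pair_le {α : Type*} (u v : α) : ({u, v} : Set α).ncard ≤ 2 :=
  (Set.ncard_insert_le u {v}).trans (by rw [Set.ncard_singleton])

def IsRowPair (j : ℤ) (u v : ℤ × ℤ) : Prop := u.2 = j ∧ v - u ∈ rowPairOffsets

lemma image_add_nbhd_inter_halfPlane_subset {j : ℤ} {w : ℤ × ℤ} (hwj : j ≤ w.2) :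
    (fun n => w + n) '' (nbhd : Set (ℤ × ℤ)) ∩ {z | z.2 < j} ⊆ {w + (0, -1)} := by
  rintro z ⟨hzI, hzL⟩
  rcases eq_or_snd_nonneg_of_mem_nbhd _ (mem_image_add_nbhd.mp hzI) with h | h
  · rw [← h, add_sub_cancel]
    rfl
  · exact absurd hzL (by simp only [Set.mem_ofPred_eq, Prod.snd_sub] at h ⊢; omega)

lemma pair_subset_of_three_le_ncard {j : ℤ} {u v w : ℤ × ℤ} (hwj : j ≤ w.2)
    (hw : 3 ≤ ((fun n => w + n) '' (nbhd : Set (ℤ × ℤ)) ∩ ({z | z.2 < j} ∪ {u, v})).ncard) :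
    w.2 = j ∧ u ≠ v ∧ {u, v} ⊆ (fun n => w + n) '' (nbhd : Set (ℤ × ℤ)) \ {z | z.2 < j} := by
  set L : Set (ℤ × ℤ) := {z | z.2 < j}
  set I := (fun n => w + n) '' (nbhd : Set (ℤ × ℤ))
  rw [← Set.union_sdiff_self, Set.inter_union_distrib_left] at hw
  have hIL : I ∩ L ⊆ {w + (0, -1)} := image_add_nbhd_inter_halfPlane_subset hwj
  have hIP : I ∩ ({u, v} \ L) ⊆ {u, v} := fun z hz => hz.2.1
  have hcount := hw.trans (Set.ncard_union_le _ _)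
  have h1 := (Set.ncard_le_ncard hIL).trans (Set.ncard_singleton _).le
  have h2 := (Set.ncard_le_ncard hIP).trans (ncard_pair_le u v)
  have h2' : 2 ≤ (I ∩ ({u, v} \ L)).ncard := by omega
  have hpair : I ∩ ({u, v} \ L) = {u, v} :=
    Set.eq_of_subset_of_ncard_le hIP ((ncard_pair_le u v).trans h2') (Set.toFinite _)
  refine ⟨?_, ?_, fun z hz => ?_⟩
  · obtain ⟨z, hz⟩ := Set.nonempty_of_ncard_ne_zero (s := I ∩ L) (by omega)
    have hz' : z.2 < j := hz.2
    rw [hIL hz, Prod.snd_add] at hz'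
    simp only at hz'
    omega
  · rintro rfl
    rw [hpair, Set.pair_eq_singleton, Set.ncard_singleton] at h2'
    omega
  · rw [← hpair] at hz
    exact ⟨hz.1, hz.2.2⟩

lemma bootOp_halfPlane_union_pair_subset {j : ℤ} {u v : ℤ × ℤ}
    (huv : ¬ IsRowPair j u v) (hvu : ¬ IsRowPair j v u) :
    bootOp nbhd 3 ({w | w.2 < j} ∪ {u, v}) ⊆ {w | w.2 < j} ∪ {u, v} := by
  rintro w (hw | hw)
  · exact hw
  by_contra hwU
  have hwj : j ≤ w.2 := not_lt.mp fun h => hwU (Or.inl h)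
  obtain ⟨hwj', hne, hsub⟩ := pair_subset_of_three_le_ncard hwj hw
  obtain ⟨hu, hu'⟩ := hsub (Set.mem_insert u {v})
  obtain ⟨hv, hv'⟩ := hsub (Set.mem_insert_of_mem u (Set.mem_singleton v))
  simp only [Set.mem_ofPred_eq, not_lt] at hu' hv'
  rcases sub_mem_rowPairOffsets_of_mem_nbhd _ (mem_image_add_nbhd.mp hu) _
    (mem_image_add_nbhd.mp hv) (by simp only [Prod.snd_sub]; omega)
    (by simp only [Prod.snd_sub]; omega) (sub_left_injective.ne hne) with ⟨hs, hd⟩ | ⟨ht, hd⟩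
  · refine huv ⟨?_, by simpa using hd⟩
    simp only [Prod.snd_sub] at hs
    omega
  · refine hvu ⟨?_, by simpa using hd⟩
    simp only [Prod.snd_sub] at ht
    omega

lemma isRowPair_or_row_subset_of_spanningPair {a b j : ℤ} {u v : ℤ × ℤ}
    (h : spanningPair a b j {u, v}) :
    IsRowPair j u v ∨ IsRowPair j v u ∨ (rectF a b j j : Set (ℤ × ℤ)) ⊆ {u, v} := by
  by_contra! hcon
  obtain ⟨huv, hvu, hrow⟩ := hcon
  have hstart : {u, v} ∪ (rectF a b (j - 1) (j - 1) : Set (ℤ × ℤ)) ⊆ {w | w.2 < j} ∪ {u, v} :=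
    Set.union_subset Set.subset_union_right fun z hz =>
      Or.inl (by rw [mem_rectF] at hz; show z.2 < j; omega)
  refine hrow fun z hz => ?_
  rcases bsClosure_minimal hstart (bootOp_halfPlane_union_pair_subset huv hvu) (h hz) with hz' | hz'
  · rw [mem_rectF] at hz
    exact absurd hz' (by show ¬ z.2 < j; omega)
  · exact hz'

def rowPair (j : ℤ) (q : ℤ × (ℤ × ℤ)) : Set (ℤ × ℤ) := {(q.1, j), (q.1, j) + q.2}

lemma rowPair_eq_of_isRowPair {j : ℤ} {u v : ℤ × ℤ} (h : IsRowPair j u v) :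
    rowPair j (u.1, v - u) = {u, v} := by
  rw [rowPair, ← h.1, add_sub_cancel]

/-- When the pair covers the row, the row has at most two sites, so it is the trace on the
rectangle of the horizontal domino at its left end. -/
lemma exists_rowPair_of_spanningPair {a b c d j : ℤ} {u v : ℤ × ℤ}
    (hu : u ∈ (rectF a b c d : Set (ℤ × ℤ))) (hv : v ∈ (rectF a b c d : Set (ℤ × ℤ)))
    (hcj : c ≤ j) (hjd : j ≤ d) (h : spanningPair a b j {u, v}) :
    ∃ q ∈ Finset.Icc a b ×ˢ rowPairOffsets,
      rowPair j q ∩ rectF a b c d ⊆ {u, v} ∧ spanningPair a b j (rowPair j q ∩ rectF a b c d) := by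
  have huv : ({u, v} : Set (ℤ × ℤ)) ∩ rectF a b c d = {u, v} :=
    Set.inter_eq_left.mpr (Set.pair_subset hu hv)
  rw [mem_rectF] at hu hv
  rcases isRowPair_or_row_subset_of_spanningPair h with hp | hp | hrow
  · refine ⟨(u.1, v - u), by simp [hu.1, hu.2.1, hp.2], ?_⟩
    rw [rowPair_eq_of_isRowPair hp, huv]
    exact ⟨subset_rfl, h⟩
  · refine ⟨(v.1, u - v), by simp [hv.1, hv.2.1, hp.2], ?_⟩
    rw [rowPair_eq_of_isRowPair hp, Set.pair_comm, huv]
    exact ⟨subset_rfl, h⟩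
  · have hcard : b ≤ a + 1 := by
      have := (Set.ncard_le_ncard hrow).trans (ncard_pair_le u v)
      rw [Set.ncard_coe_finset, rectF, Finset.card_product, Int.card_Icc, Int.card_Icc] at this
      simp only [add_sub_cancel_left, Int.toNat_one, mul_one] at this
      omega
    have hQ : rowPair j (a, (1, 0)) ∩ rectF a b c d = rectF a b j j := by
      ext z
      simp only [rowPair, Set.mem_inter_iff, Set.mem_insert_iff, Set.mem_singleton_iff, mem_rectF,
        Prod.ext_iff, Prod.fst_add, Prod.snd_add]
      omega
    refine ⟨(a, (1, 0)), by simp [rowPairOffsets]; omega, ?_⟩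
    rw [hQ]
    exact ⟨hrow, Set.subset_union_left.trans subset_bsClosure⟩

lemma upTrav_of_forall_exists_spanningPair {a b c d : ℤ} {P : Set (ℤ × ℤ)}
    (hP : P ⊆ rectF a b c d) (hrows : ∀ j, c ≤ j → j ≤ d → ∃ Q ⊆ P, spanningPair a b j Q) :
    upTrav a b c d P := by
  set Z := bsClosure nbhd 3 (P ∪ rectF a b (c - 1) (c - 1))
  have hrow : ∀ j, c - 1 ≤ j → j ≤ d → (rectF a b j j : Set (ℤ × ℤ)) ⊆ Z := by
    intro j hj
    induction j, hj using Int.leInduction with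
    | base => exact fun _ => Set.subset_union_right.trans subset_bsClosure
    | succ j hj ih =>
      intro hjd
      obtain ⟨Q, hQP, hQ⟩ := hrows (j + 1) (by omega) hjd
      refine hQ.trans (bsClosure_subset_of_subset_bsClosure (Set.union_subset ?_ ?_))
      · exact (hQP.trans Set.subset_union_left).trans subset_bsClosure
      · simpa using ih (by omega)
  rw [upTrav, Set.inter_eq_right.mpr hP]
  intro z hz
  rw [mem_rectF] at hz
  exact hrow z.2 (by omega) hz.2.2.2 (mem_rectF.mpr ⟨hz.1, hz.2.1, le_rfl, le_rfl⟩)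

lemma F0_subset_image_rowPairs (a b c : ℤ) (y : ℕ) :
    F0 a b c (c + y - 1) ⊆ (fun g : Fin y → ℤ × (ℤ × ℤ) =>
        (⋃ i : Fin y, rowPair (c + (i : ℕ)) (g i)) ∩ rectF a b c (c + y - 1)) ''
      ↑(Fintype.piFinset fun _ : Fin y => Finset.Icc a b ×ˢ rowPairOffsets) := by
  rintro A ⟨hAR, -, hmin, hpairs⟩
  have hcode : ∀ i : Fin y, ∃ q ∈ Finset.Icc a b ×ˢ rowPairOffsets,
      rowPair (c + (i : ℕ)) q ∩ rectF a b c (c + y - 1) ⊆ A ∧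
        spanningPair a b (c + (i : ℕ)) (rowPair (c + (i : ℕ)) q ∩ rectF a b c (c + y - 1)) := by
    intro i
    obtain ⟨u, v, hu, hv, -, hsp⟩ := hpairs (c + (i : ℕ)) (by omega) (by omega)
    obtain ⟨q, hq, hsub, hQ⟩ :=
      exists_rowPair_of_spanningPair (hAR hu) (hAR hv) (by omega) (by omega) hsp
    exact ⟨q, hq, hsub.trans (Set.pair_subset hu hv), hQ⟩
  choose g hg hgA hgQ using hcode
  set P := (⋃ i : Fin y, rowPair (c + (i : ℕ)) (g i)) ∩ rectF a b c (c + y - 1)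
  have hPA : P ⊆ A := (Set.iUnion_inter _ _).trans_subset (Set.iUnion_subset hgA)
  have hP : upTrav a b c (c + y - 1) P := by
    refine upTrav_of_forall_exists_spanningPair Set.inter_subset_right fun j hcj hjd => ?_
    obtain ⟨k, rfl⟩ : ∃ k : ℕ, j = c + k := ⟨(j - c).toNat, by omega⟩
    have hk : k < y := by omega
    exact ⟨_, Set.inter_subset_inter_left _
      (Set.subset_iUnion (fun i : Fin y => rowPair (c + (i : ℕ)) (g i)) ⟨k, hk⟩), hgQ ⟨k, hk⟩⟩
  exact ⟨g, Fintype.mem_piFinset.mpr hg, hPA.eq_of_not_ssubset fun h => hmin P h hP⟩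

lemma ncard_F0_le (a b c : ℤ) (y : ℕ) :
    (F0 a b c (c + y - 1)).ncard ≤ ((b + 1 - a).toNat * 8) ^ y := by
  calc (F0 a b c (c + y - 1)).ncard
      ≤ (Fintype.piFinset fun _ : Fin y => Finset.Icc a b ×ˢ rowPairOffsets).card :=
        (Set.ncard_le_ncard (F0_subset_image_rowPairs a b c y)
          ((Finset.finite_toSet _).image _)).trans
        ((Set.ncard_image_le (Finset.finite_toSet _)).trans (Set.ncard_coe_finset _).le)
    _ = ((b + 1 - a).toNat * 8) ^ y := by
        simp [Fintype.card_piFinset, Finset.card_product, rowPairOffsets]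

theorem stmt10_general (a c : ℤ) (x y : ℕ) (hy : 1 ≤ y) :
    (F0 a (a + (x:ℤ) - 1) c (c + (y:ℤ) - 1)).ncard ≤
      ∑ r ∈ Finset.Icc 1 y, 8^y * Nat.choose (y-1) (r-1) * x^r := by
  have hx : (a + (x : ℤ) - 1 + 1 - a).toNat = x := by omega
  calc (F0 a (a + (x:ℤ) - 1) c (c + (y:ℤ) - 1)).ncard
      ≤ (x * 8) ^ y := (ncard_F0_le a (a + x - 1) c y).trans_eq (by rw [hx])
    _ = 8 ^ y * Nat.choose (y - 1) (y - 1) * x ^ y := by rw [Nat.choose_self]; ring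
    _ ≤ _ := Finset.single_le_sum (f := fun r => 8 ^ y * Nat.choose (y - 1) (r - 1) * x ^ r)
        (fun _ _ => Nat.zero_le _) (Finset.mem_Icc.mpr ⟨hy, le_rfl⟩)

theorem stmt10 (a c : ℤ) (x y : ℕ) (hx : 1 ≤ x) (hy : 1 ≤ y) :
    (F0 a (a + (x:ℤ) - 1) c (c + (y:ℤ) - 1)).ncard ≤
      ∑ r ∈ Finset.Icc 1 y, 8^y * Nat.choose (y-1) (r-1) * x^r :=
  stmt10_general a c x y hy
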